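/- arXiv:2001.04774 — 7 statements merged into one kernel-verified Lean document; each statement's English description precedes it below -/
import Mathlib

section
/- Let F : A → B be a fully faithful functor with adjoints L ⊣ F ⊣ R. Then the two canonical natural transformations R → L, namely φ = (η_R⁻¹ L) ∘ (R η_L) : R → RFL → L and ψ = (L ε_R) ∘ (ε_L⁻¹ R) : R → LFR → L, are equal. -/
open CategoryTheory

/-- For a fully faithful `F` with adjoints `L ⊣ F ⊣ R`, the two
canonical natural transformations `R ⟶ L`, namely
`φ = (η_R⁻¹ L) ∘ (R η_L)` and `ψ = (L ε_R) ∘ (ε_L⁻¹ R)`, coincide. -/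
theorem exceptional_canonical_maps_eq {A B : Type*} [Category A] [Category B]
    (F : A ⥤ B) (L R : B ⥤ A) (adjL : L ⊣ F) (adjR : F ⊣ R)
    [F.Full] [F.Faithful] :
    Functor.whiskerRight adjL.unit R ≫ inv (Functor.whiskerLeft L adjR.unit)
      = inv (Functor.whiskerLeft R adjL.counit) ≫ Functor.whiskerRight adjR.counit L := by
  let t : Adjunction.Triple L F R := ⟨adjL, adjR⟩
  ext X
  simpa using congr_app (t.rightToLeft_eq_units.symm.trans t.rightToLeft_eq_counits) X
end

section
/- Let F : A → B be a fully faithful functor with adjoints L ⊣ F ⊣ R, and suppose there exists a natural isomorphism α : R ≅ L. Then the canonical map φ : R → L defined by φ = (η_R⁻¹ L) ∘ (R η_L) is itself a natural isomorphism. -/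
open CategoryTheory

/-! Since `F` is fully faithful, the unit of `F ⊣ R` is invertible, and so is `L η_L` (by the
triangle identity, as the counit of `L ⊣ F` is invertible). Whether a whiskered transformation
is invertible depends only on the isomorphism class of the whiskering functor, so `α` transports
the invertibility of `L η_L` to `R η_L`. -/

theorem CategoryTheory.Functor.isIso_whiskerRight_of_iso {C D E : Type*} [Category C]
    [Category D] [Category E] {F₁ F₂ : C ⥤ D} (τ : F₁ ⟶ F₂) {G H : D ⥤ E} (e : G ≅ H)
    [hτ : IsIso (Functor.whiskerRight τ G)] : IsIso (Functor.whiskerRight τ H) := by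
  rw [NatTrans.isIso_iff_isIso_app] at hτ ⊢
  exact fun X ↦ (NatIso.isIso_map_iff e (τ.app X)).mp (hτ X)

/-- If `F` is fully faithful with adjoints `L ⊣ F ⊣ R` and the two
adjoints are isomorphic via some natural isomorphism `α : R ≅ L`, then the
canonical map `φ = (η_R⁻¹ L) ∘ (R η_L) : R ⟶ L` is itself an isomorphism. -/
theorem frobenius_canonical_map_iso {A B : Type*} [Category A] [Category B]
    (F : A ⥤ B) (L R : B ⥤ A) (adjL : L ⊣ F) (adjR : F ⊣ R)
    [F.Full] [F.Faithful] (α : R ≅ L) :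
    IsIso (Functor.whiskerRight adjL.unit R ≫ inv (Functor.whiskerLeft L adjR.unit)) := by
  have : IsIso (Functor.whiskerRight adjL.unit R) :=
    Functor.isIso_whiskerRight_of_iso adjL.unit α.symm
  infer_instance
end

section
/- Let F : A → B be a fully faithful exact functor between triangulated categories with adjoints L ⊣ F ⊣ R, and suppose the twist T (defined by the triangle FR → id_B → T) and dual twist T' (defined by T' → id_B → FL) exist. Then the restriction of T to ker L ⊆ B lands in ker R and induces an equivalence ker L ≃ ker R; similarly T' induces an equivalence ker R ≃ ker L. -/
/-!
Let `𝒜` be the essential image of `F`, a triangulated subcategory of `B`. By adjunction,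
`ker R` lies in the right orthogonal of `𝒜` and `ker L` in its left orthogonal. The triangle
`FR X → X → T X` has first vertex in `𝒜` and third vertex in `ker R` (apply `R`: `R ε` is
invertible since `F` is fully faithful). For `X ∈ ker L`, composing with `X → T X` therefore
gives bijections `Hom(X, X') ≃ Hom(X, T X') ≃ Hom(T X, T X')`, so `T` is fully faithful on
`ker L`; dually `T'` is fully faithful on `ker R`. For `Y ∈ ker R`, the rotated dual triangle
`(FL Y)[-1] → T' Y → Y` and the twist triangle `FR T' Y → T' Y → T T' Y` both split `T' Y`
into a piece of `𝒜` and a piece of its right orthogonal, so `T T' Y ≅ Y`. Full faithfulness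
of `T` then turns `T T' T X ≅ T X` into `T' T X ≅ X` for `X ∈ ker L`.
-/

open CategoryTheory Limits Pretriangulated

namespace CategoryTheory.Pretriangulated

variable {C : Type*} [Category C] [HasZeroObject C] [Preadditive C] [HasShift C ℤ]
  [∀ n : ℤ, (shiftFunctor C n).Additive] [Pretriangulated C]
  (P : ObjectProperty C) [P.IsStableUnderShift ℤ]

lemma bijective_mor₂_comp_of_rightOrthogonal {T : Triangle C} (hT : T ∈ distTriang C)
    (h₁ : P T.obj₁) {W : C} (hW : P.rightOrthogonal W) :
    Function.Bijective (fun f : T.obj₃ ⟶ W => T.mor₂ ≫ f) := by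
  refine ⟨(injective_iff_map_eq_zero (Preadditive.leftComp W T.mor₂)).2 fun f hf => ?_,
    fun p => ?_⟩
  · obtain ⟨g, rfl⟩ := Triangle.yoneda_exact₃ T hT f hf
    simp [hW g (P.le_shift 1 _ h₁)]
  · obtain ⟨g, hg⟩ := Triangle.yoneda_exact₂ T hT p (hW _ h₁)
    exact ⟨g, hg.symm⟩

lemma bijective_comp_mor₂_of_leftOrthogonal {T : Triangle C} (hT : T ∈ distTriang C)
    (h₁ : P T.obj₁) {W : C} (hW : P.leftOrthogonal W) :
    Function.Bijective (fun f : W ⟶ T.obj₂ => f ≫ T.mor₂) := by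
  refine ⟨(injective_iff_map_eq_zero (Preadditive.rightComp W T.mor₂)).2 fun f hf => ?_,
    fun p => ?_⟩
  · obtain ⟨g, rfl⟩ := Triangle.coyoneda_exact₂ T hT f hf
    simp [hW g h₁]
  · obtain ⟨g, hg⟩ := Triangle.coyoneda_exact₃ T hT p (hW _ (P.le_shift 1 _ h₁))
    exact ⟨g, hg.symm⟩

lemma exists_iso_of_distTriang_of_rightOrthogonal {A₁ A₂ X B₁ B₂ : C}
    {u₁ : A₁ ⟶ X} {v₁ : X ⟶ B₁} {w₁ : B₁ ⟶ A₁⟦(1 : ℤ)⟧}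
    {u₂ : A₂ ⟶ X} {v₂ : X ⟶ B₂} {w₂ : B₂ ⟶ A₂⟦(1 : ℤ)⟧}
    (h₁ : Triangle.mk u₁ v₁ w₁ ∈ distTriang C) (h₂ : Triangle.mk u₂ v₂ w₂ ∈ distTriang C)
    (hA₁ : P A₁) (hA₂ : P A₂) (hB₁ : P.rightOrthogonal B₁) (hB₂ : P.rightOrthogonal B₂) :
    ∃ e : B₁ ≅ B₂, v₁ ≫ e.hom = v₂ := by
  obtain ⟨(g : B₁ ⟶ B₂), (hg : v₁ ≫ g = v₂)⟩ :=
    (bijective_mor₂_comp_of_rightOrthogonal P h₁ hA₁ hB₂).2 v₂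
  obtain ⟨(g' : B₂ ⟶ B₁), (hg' : v₂ ≫ g' = v₁)⟩ :=
    (bijective_mor₂_comp_of_rightOrthogonal P h₂ hA₂ hB₁).2 v₁
  refine ⟨⟨g, g', (bijective_mor₂_comp_of_rightOrthogonal P h₁ hA₁ hB₁).1 ?_,
    (bijective_mor₂_comp_of_rightOrthogonal P h₂ hA₂ hB₂).1 ?_⟩, hg⟩
  · change v₁ ≫ g ≫ g' = v₁ ≫ 𝟙 B₁
    rw [reassoc_of% hg, hg', Category.comp_id]
  · change v₂ ≫ g' ≫ g = v₂ ≫ 𝟙 B₂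
    rw [reassoc_of% hg', hg, Category.comp_id]

end CategoryTheory.Pretriangulated

namespace CategoryTheory

lemma ObjectProperty.exists_equivalence_of_fullyFaithful {C D : Type*}
    [Category C] [Category D] {G : C ⥤ D} (Q : ObjectProperty D) (hG : ∀ X, Q (G.obj X))
    (hff : G.FullyFaithful)
    (hsurj : ∀ Y, Q Y → ∃ X, Nonempty (G.obj X ≅ Y)) :
    ∃ e : C ≌ Q.FullSubcategory, Nonempty (e.functor ⋙ Q.ι ≅ G) := by
  let G' := Q.lift G hG
  have hff' : G'.FullyFaithful := Functor.FullyFaithful.ofCompFaithful (G := Q.ι) hff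
  have := hff'.full
  have := hff'.faithful
  have : G'.EssSurj := ⟨fun Y => by
    obtain ⟨X, ⟨e⟩⟩ := hsurj Y.obj Y.property
    exact ⟨X, ⟨Q.fullyFaithfulι.preimageIso e⟩⟩⟩
  have : G'.IsEquivalence := {}
  exact ⟨G'.asEquivalence, ⟨Q.liftCompιIso G hG⟩⟩

variable {C D : Type*} [Category C] [Category D] [HasZeroMorphisms D]

lemma Adjunction.rightOrthogonal_essImage_of_isZero {F : C ⥤ D} {R : D ⥤ C} (adj : F ⊣ R)
    {Z : D} (hZ : IsZero (R.obj Z)) : F.essImage.rightOrthogonal Z := by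
  rintro X f ⟨a, ⟨e⟩⟩
  rw [← cancel_epi e.hom, comp_zero]
  exact (adj.homEquiv _ _).injective (hZ.eq_of_tgt _ _)

lemma Adjunction.leftOrthogonal_essImage_of_isZero {F : C ⥤ D} {L : D ⥤ C} (adj : L ⊣ F)
    {Z : D} (hZ : IsZero (L.obj Z)) : F.essImage.leftOrthogonal Z := by
  rintro X f ⟨a, ⟨e⟩⟩
  rw [← cancel_mono e.inv, zero_comp]
  exact (adj.homEquiv _ _).symm.injective (hZ.eq_of_src _ _)

end CategoryTheory

namespace CategoryTheory.Pretriangulated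

variable {A B : Type*} [Category A] [Category B]
  [HasZeroObject A] [HasZeroObject B] [Preadditive A] [Preadditive B]
  [HasShift A ℤ] [HasShift B ℤ]
  [∀ n : ℤ, (shiftFunctor A n).Additive] [∀ n : ℤ, (shiftFunctor B n).Additive]
  [Pretriangulated A] [Pretriangulated B]
  {F : A ⥤ B} {L R : B ⥤ A} [F.Full] [F.Faithful]

lemma isZero_of_distTriang_counit [R.CommShift ℤ] [R.IsTriangulated] (adj : F ⊣ R)
    {X Y : B} {g : X ⟶ Y} {h : Y ⟶ (F.obj (R.obj X))⟦(1 : ℤ)⟧}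
    (hT : Triangle.mk (adj.counit.app X) g h ∈ distTriang B) : IsZero (R.obj Y) :=
  Triangle.isZero₃_of_isIso₁ _ (R.map_distinguished _ hT)
    (inferInstanceAs (IsIso (R.map (adj.counit.app X))))

lemma isZero_of_distTriang_unit [L.CommShift ℤ] [L.IsTriangulated] (adj : L ⊣ F)
    {X Y : B} {f : X ⟶ Y} {h : F.obj (L.obj Y) ⟶ X⟦(1 : ℤ)⟧}
    (hT : Triangle.mk f (adj.unit.app Y) h ∈ distTriang B) : IsZero (L.obj X) :=
  Triangle.isZero₁_of_isIso₂ _ (L.map_distinguished _ hT)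
    (inferInstanceAs (IsIso (L.map (adj.unit.app Y))))

variable [F.CommShift ℤ] [F.IsTriangulated] (adjL : L ⊣ F) (adjR : F ⊣ R)
  {T : B ⥤ B} {α : 𝟭 B ⟶ T} {β : T ⟶ (R ⋙ F) ⋙ shiftFunctor B (1 : ℤ)}
  (hT : ∀ X : B, Triangle.mk (adjR.counit.app X) (α.app X) (β.app X) ∈ distTriang B)
  {T' : B ⥤ B} {δ : T' ⟶ 𝟭 B} {γ : L ⋙ F ⟶ T' ⋙ shiftFunctor B (1 : ℤ)}
  (hT' : ∀ X : B, Triangle.mk (δ.app X) (adjL.unit.app X) (γ.app X) ∈ distTriang B)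

include adjL hT in
lemma twist_map_bijective [R.CommShift ℤ] [R.IsTriangulated] {X : B} (hX : IsZero (L.obj X))
    (X' : B) : Function.Bijective (T.map : (X ⟶ X') → _) := by
  have hpost : Function.Bijective (fun f : X ⟶ X' => f ≫ α.app X') :=
    bijective_comp_mor₂_of_leftOrthogonal F.essImage (hT X') (F.obj_mem_essImage _)
      (adjL.leftOrthogonal_essImage_of_isZero hX)
  have hpre : Function.Bijective (fun g : T.obj X ⟶ T.obj X' => α.app X ≫ g) :=
    bijective_mor₂_comp_of_rightOrthogonal F.essImage (hT X) (F.obj_mem_essImage _)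
      (adjR.rightOrthogonal_essImage_of_isZero (isZero_of_distTriang_counit adjR (hT X')))
  have hcomm : (fun g => α.app X ≫ g) ∘ T.map = fun f : X ⟶ X' => f ≫ α.app X' :=
    funext fun f => (α.naturality f).symm
  rw [← hcomm] at hpost
  exact (Function.Bijective.of_comp_iff' hpre _).1 hpost

include adjR hT' in
lemma dualTwist_map_bijective [L.CommShift ℤ] [L.IsTriangulated] (Y : B) {Y' : B}
    (hY' : IsZero (R.obj Y')) : Function.Bijective (T'.map : (Y ⟶ Y') → _) := by
  have hpre : Function.Bijective (fun f : Y ⟶ Y' => δ.app Y ≫ f) :=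
    bijective_mor₂_comp_of_rightOrthogonal F.essImage (inv_rot_of_distTriang _ (hT' Y))
      (F.essImage.le_shift _ _ (F.obj_mem_essImage _))
      (adjR.rightOrthogonal_essImage_of_isZero hY')
  have hpost : Function.Bijective (fun g : T'.obj Y ⟶ T'.obj Y' => g ≫ δ.app Y') :=
    bijective_comp_mor₂_of_leftOrthogonal F.essImage (inv_rot_of_distTriang _ (hT' Y'))
      (F.essImage.le_shift _ _ (F.obj_mem_essImage _))
      (adjL.leftOrthogonal_essImage_of_isZero (isZero_of_distTriang_unit adjL (hT' Y)))
  have hcomm : (fun g => g ≫ δ.app Y') ∘ T'.map = fun f : Y ⟶ Y' => δ.app Y ≫ f :=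
    funext fun f => δ.naturality f
  rw [← hcomm] at hpre
  exact (Function.Bijective.of_comp_iff' hpost _).1 hpre

include hT hT' in
lemma nonempty_twist_obj_dualTwist_obj_iso [R.CommShift ℤ] [R.IsTriangulated] {Y : B}
    (hY : IsZero (R.obj Y)) : Nonempty (T.obj (T'.obj Y) ≅ Y) := by
  obtain ⟨e, -⟩ := exists_iso_of_distTriang_of_rightOrthogonal F.essImage (hT (T'.obj Y))
    (inv_rot_of_distTriang _ (hT' Y)) (F.obj_mem_essImage _)
    (F.essImage.le_shift _ _ (F.obj_mem_essImage _))
    (adjR.rightOrthogonal_essImage_of_isZero (isZero_of_distTriang_counit adjR (hT _)))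
    (adjR.rightOrthogonal_essImage_of_isZero hY)
  exact ⟨e⟩

end CategoryTheory.Pretriangulated

/-- For a fully faithful exact functor `F` with adjoints
`L ⊣ F ⊣ R`, twist `T` (with triangle `FR → id → T`) and dual twist `T'`
(with triangle `T' → id → FL`), the twist `T` sends `ker L` into `ker R` and
induces an equivalence `ker L ≃ ker R`; similarly `T'` induces an equivalence
`ker R ≃ ker L`. -/
theorem twist_equivalence_of_kernels {A B : Type*} [Category A] [Category B]
    [HasZeroObject A] [HasZeroObject B] [Preadditive A] [Preadditive B]
    [HasShift A ℤ] [HasShift B ℤ]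
    [∀ n : ℤ, (shiftFunctor A n).Additive] [∀ n : ℤ, (shiftFunctor B n).Additive]
    [Pretriangulated A] [Pretriangulated B]
    (F : A ⥤ B) (L R : B ⥤ A)
    [F.CommShift ℤ] [L.CommShift ℤ] [R.CommShift ℤ]
    [F.IsTriangulated] [L.IsTriangulated] [R.IsTriangulated]
    (adjL : L ⊣ F) (adjR : F ⊣ R) [F.Full] [F.Faithful]
    -- twist T with its defining triangle of functors FR → id_B → T
    (T : B ⥤ B) (α : 𝟭 B ⟶ T) (β : T ⟶ (R ⋙ F) ⋙ shiftFunctor B (1 : ℤ))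
    (hT : ∀ X : B, Triangle.mk (adjR.counit.app X) (α.app X) (β.app X) ∈ distTriang B)
    -- dual twist T' with its defining triangle of functors T' → id_B → FL
    (T' : B ⥤ B) (δ : T' ⟶ 𝟭 B) (γ : L ⋙ F ⟶ T' ⋙ shiftFunctor B (1 : ℤ))
    (hT' : ∀ X : B, Triangle.mk (δ.app X) (adjL.unit.app X) (γ.app X) ∈ distTriang B) :
    -- T sends ker L into ker R
    (∀ X : B, IsZero (L.obj X) → IsZero (R.obj (T.obj X))) ∧
    -- T induces an equivalence ker L ≃ ker R
    (∃ e : ObjectProperty.FullSubcategory (fun X : B => IsZero (L.obj X)) ≌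
        ObjectProperty.FullSubcategory (fun X : B => IsZero (R.obj X)),
      Nonempty (e.functor ⋙ ObjectProperty.ι (fun X : B => IsZero (R.obj X)) ≅
        ObjectProperty.ι (fun X : B => IsZero (L.obj X)) ⋙ T)) ∧
    -- T' sends ker R into ker L
    (∀ X : B, IsZero (R.obj X) → IsZero (L.obj (T'.obj X))) ∧
    -- T' induces an equivalence ker R ≃ ker L
    (∃ e' : ObjectProperty.FullSubcategory (fun X : B => IsZero (R.obj X)) ≌
        ObjectProperty.FullSubcategory (fun X : B => IsZero (L.obj X)),
      Nonempty (e'.functor ⋙ ObjectProperty.ι (fun X : B => IsZero (L.obj X)) ≅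
        ObjectProperty.ι (fun X : B => IsZero (R.obj X)) ⋙ T')) := by
  let kerL : ObjectProperty B := fun X => IsZero (L.obj X)
  let kerR : ObjectProperty B := fun X => IsZero (R.obj X)
  have hTR (X : B) : kerR (T.obj X) := isZero_of_distTriang_counit adjR (hT X)
  have hT'L (Y : B) : kerL (T'.obj Y) := isZero_of_distTriang_unit adjL (hT' Y)
  obtain ⟨hTff⟩ : Nonempty (kerL.ι ⋙ T).FullyFaithful :=
    (Functor.FullyFaithful.nonempty_iff_map_bijective _).2 fun X X' =>
      (twist_map_bijective adjL adjR hT X.property X'.obj).comp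
        (kerL.fullyFaithfulι.map_bijective X X')
  obtain ⟨hT'ff⟩ : Nonempty (kerR.ι ⋙ T').FullyFaithful :=
    (Functor.FullyFaithful.nonempty_iff_map_bijective _).2 fun Y Y' =>
      (dualTwist_map_bijective adjL adjR hT' Y.obj Y'.property).comp
        (kerR.fullyFaithfulι.map_bijective Y Y')
  refine ⟨fun X _ => hTR X,
    kerR.exists_equivalence_of_fullyFaithful (fun X => hTR X.obj) hTff fun Y hY =>
      ⟨⟨T'.obj Y, hT'L Y⟩, nonempty_twist_obj_dualTwist_obj_iso adjL adjR hT hT' hY⟩,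
    fun Y _ => hT'L Y,
    kerL.exists_equivalence_of_fullyFaithful (fun Y => hT'L Y.obj) hT'ff fun X hX => ?_⟩
  obtain ⟨e⟩ := nonempty_twist_obj_dualTwist_obj_iso adjL adjR hT hT' (hTR X)
  exact ⟨⟨T.obj X, hTR X⟩,
    ⟨kerL.ι.mapIso (hTff.preimageIso (X := ⟨_, hT'L _⟩) (Y := ⟨X, hX⟩) e)⟩⟩
end

section
/- Let F : A → B be a fully faithful exact functor with adjoints L ⊣ F ⊣ R, twist T, and dual twist T'. Then the cocone P of the canonical map φ : R → L fits into triangles R T' → R → L and R → L → L T [1]; that is, P ≅ R T' and P ≅ L T [−1]. -/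
open CategoryTheory Limits Pretriangulated

/-!
`R` is exact, so it sends the dual-twist triangle `T' X → X → F L X` to a distinguished triangle
`R T' X → R X → R F L X`; since `F` is fully faithful the unit `L ⟶ R F L` of `F ⊣ R` is an
isomorphism, and it identifies `R η_L` with `φ`. Dually, `L` sends the twist triangle
`F R X → X → T X` to `L F R X → L X → L T X`, and the counit `L F R ⟶ R` of `L ⊣ F` identifies
`L ε_R` with `φ`. Both identifications are the defining properties of the canonical map `R ⟶ L`
of the adjoint triple `L ⊣ F ⊣ R`.
-/

namespace CategoryTheory.Pretriangulated

variable {C : Type*} [Category C] [HasZeroObject C] [HasShift C ℤ] [Preadditive C]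
  [∀ n : ℤ, (shiftFunctor C n).Additive] [Pretriangulated C]

lemma mk_distinguished_of_iso₁ {X₁ X₁' X₂ X₃ : C} (e : X₁' ≅ X₁)
    {f : X₁ ⟶ X₂} {f' : X₁' ⟶ X₂} {g : X₂ ⟶ X₃} {h : X₃ ⟶ X₁⟦(1 : ℤ)⟧} {h' : X₃ ⟶ X₁'⟦(1 : ℤ)⟧}
    (hT : Triangle.mk f g h ∈ distTriang C) (hf : e.hom ≫ f = f')
    (hh : h ≫ e.inv⟦(1 : ℤ)⟧' = h') :
    Triangle.mk f' g h' ∈ distTriang C := by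
  subst hf hh
  exact isomorphic_distinguished _ hT _ <| Triangle.isoMk _ _ e (Iso.refl _) (Iso.refl _)
    (by simp [Triangle.mk]) (by simp [Triangle.mk]) (by simp [Triangle.mk, ← Functor.map_comp])

lemma mk_distinguished_of_iso₃ {X₁ X₂ X₃ X₃' : C} (e : X₃ ≅ X₃')
    {f : X₁ ⟶ X₂} {g : X₂ ⟶ X₃} {g' : X₂ ⟶ X₃'} {h : X₃ ⟶ X₁⟦(1 : ℤ)⟧} {h' : X₃' ⟶ X₁⟦(1 : ℤ)⟧}
    (hT : Triangle.mk f g h ∈ distTriang C) (hg : g ≫ e.hom = g') (hh : e.inv ≫ h = h') :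
    Triangle.mk f g' h' ∈ distTriang C := by
  subst hg hh
  exact isomorphic_distinguished _ hT _ <| Triangle.isoMk _ _ (Iso.refl _) (Iso.refl _) e.symm
    (by simp [Triangle.mk]) (by simp [Triangle.mk]) (by simp [Triangle.mk])

end CategoryTheory.Pretriangulated

namespace CategoryTheory.Adjunction.Triple

variable {C D : Type*} [Category C] [Category D] {F H : C ⥤ D} {G : D ⥤ C} (t : Triple F G H)
  [G.Full] [G.Faithful]

lemma rightToLeft_eq_whiskerRight_unit_comp_inv :
    t.rightToLeft =
      Functor.whiskerRight t.adj₁.unit H ≫ inv (Functor.whiskerLeft F t.adj₂.unit) := by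
  ext X
  simp [← cancel_mono (t.adj₂.unit.app (F.obj X))]

end CategoryTheory.Adjunction.Triple

/-- For an exceptional functor `F` with adjoints `L ⊣ F ⊣ R`,
twist `T` and dual twist `T'`, the cocone `P` of the canonical map
`φ : R ⟶ L` is isomorphic to both `R T'` and `L T [-1]`: there are
distinguished triangles `R T' X → R X → L X` and `R X → L X → L T X`
(the latter being the rotation of `L T [-1] → R → L`), objectwise, with middle
map `φ`. -/
theorem cocone_of_canonical_map {A B : Type*} [Category A] [Category B]
    [HasZeroObject A] [HasZeroObject B] [Preadditive A] [Preadditive B]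
    [HasShift A ℤ] [HasShift B ℤ]
    [∀ n : ℤ, (shiftFunctor A n).Additive] [∀ n : ℤ, (shiftFunctor B n).Additive]
    [Pretriangulated A] [Pretriangulated B]
    (F : A ⥤ B) (L R : B ⥤ A)
    [F.CommShift ℤ] [L.CommShift ℤ] [R.CommShift ℤ]
    [F.IsTriangulated] [L.IsTriangulated] [R.IsTriangulated]
    (adjL : L ⊣ F) (adjR : F ⊣ R) [F.Full] [F.Faithful]
    (T : B ⥤ B) (α : 𝟭 B ⟶ T) (β : T ⟶ (R ⋙ F) ⋙ shiftFunctor B (1 : ℤ))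
    (hT : ∀ X : B, Triangle.mk (adjR.counit.app X) (α.app X) (β.app X) ∈ distTriang B)
    (T' : B ⥤ B) (δ : T' ⟶ 𝟭 B) (γ : L ⋙ F ⟶ T' ⋙ shiftFunctor B (1 : ℤ))
    (hT' : ∀ X : B, Triangle.mk (δ.app X) (adjL.unit.app X) (γ.app X) ∈ distTriang B) :
    -- the triangle R T' → R → L
    (∃ (u : T' ⋙ R ⟶ R) (w : L ⟶ (T' ⋙ R) ⋙ shiftFunctor A (1 : ℤ)),
      ∀ X : B, Triangle.mk (u.app X)
        ((Functor.whiskerRight adjL.unit R ≫ inv (Functor.whiskerLeft L adjR.unit)).app X)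
        (w.app X) ∈ distTriang A) ∧
    -- the rotated triangle R → L → L T (so that the cocone of φ is L T [-1])
    (∃ (v : L ⟶ T ⋙ L) (w' : T ⋙ L ⟶ R ⋙ shiftFunctor A (1 : ℤ)),
      ∀ X : B, Triangle.mk
        ((Functor.whiskerRight adjL.unit R ≫ inv (Functor.whiskerLeft L adjR.unit)).app X)
        (v.app X) (w'.app X) ∈ distTriang A) := by
  let t : Adjunction.Triple L F R := ⟨adjL, adjR⟩
  rw [← t.rightToLeft_eq_whiskerRight_unit_comp_inv]
  constructor
  · refine ⟨Functor.whiskerRight δ R, Functor.whiskerLeft L adjR.unit ≫ Functor.whiskerRight γ R ≫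
      Functor.whiskerLeft T' (R.commShiftIso (1 : ℤ)).hom, fun X => ?_⟩
    exact mk_distinguished_of_iso₃ (asIso (adjR.unit.app (L.obj X))).symm
      (R.map_distinguished _ (hT' X))
      (IsIso.comp_inv_eq _ |>.mpr (t.rightToLeft_app_adj₂_unit_app X).symm) rfl
  · refine ⟨Functor.whiskerRight α L, Functor.whiskerRight β L ≫
      Functor.whiskerLeft (R ⋙ F) (L.commShiftIso (1 : ℤ)).hom ≫
      Functor.whiskerRight (Functor.whiskerLeft R adjL.counit) (shiftFunctor A (1 : ℤ)),
      fun X => ?_⟩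
    exact mk_distinguished_of_iso₁ (asIso (adjL.counit.app (R.obj X))).symm
      (L.map_distinguished _ (hT X))
      (IsIso.inv_comp_eq _ |>.mpr (t.adj₁_counit_app_rightToLeft_app X).symm)
      (Category.assoc _ _ _)
end

section
/- Let F : A → B be an exceptional functor (fully faithful with adjoints L ⊣ F ⊣ R), with P = R T' the cocone of φ : R → L. Then the Frobenius codomain Frb F := ker P contains the essential image of F, and decomposes as an orthogonal direct sum Frb F = im F ⊕ (ker R ∩ ker L); here im F and ker R ∩ ker L are mutually Hom-orthogonal subcategories of B. -/
open CategoryTheory Limits Pretriangulated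

section Aux

variable {A B : Type*} [Category A] [Category B] [HasZeroMorphisms A] [HasZeroMorphisms B]

/-- Maps from the image of `F` into an object killed by the right adjoint `R` vanish. -/
lemma aux_hom_zero_of_isZero_R {F : A ⥤ B} {R : B ⥤ A} (adjR : F ⊣ R) {a : A} {W : B}
    (hW : IsZero (R.obj W)) (f : F.obj a ⟶ W) : f = 0 :=
  (adjR.homEquiv a W).injective (hW.eq_of_tgt _ _)

/-- Maps from an object killed by the left adjoint `L` into the image of `F` vanish. -/
lemma aux_hom_zero_of_isZero_L {L : B ⥤ A} {F : A ⥤ B} (adjL : L ⊣ F) {a : A} {W : B}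
    (hW : IsZero (L.obj W)) (g : W ⟶ F.obj a) : g = 0 :=
  (adjL.homEquiv W a).symm.injective (hW.eq_of_src _ _)

end Aux

/-- For an exceptional functor `F` with adjoints `L ⊣ F ⊣ R` and
dual twist `T'`, set `P = R T'` and `Frb F = ker P`. Then `im F ⊆ Frb F`, the
subcategories `im F` and `ker R ∩ ker L` are mutually Hom-orthogonal, and every
object of `Frb F` decomposes as a direct sum of an object of `im F` and an
object of `ker R ∩ ker L`. -/
theorem frobenius_codomain_decomposition {A B : Type*} [Category A] [Category B]
    [HasZeroObject A] [HasZeroObject B] [Preadditive A] [Preadditive B]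
    [HasShift A ℤ] [HasShift B ℤ]
    [∀ n : ℤ, (shiftFunctor A n).Additive] [∀ n : ℤ, (shiftFunctor B n).Additive]
    [Pretriangulated A] [Pretriangulated B] [HasBinaryBiproducts B]
    (F : A ⥤ B) (L R : B ⥤ A)
    [F.CommShift ℤ] [L.CommShift ℤ] [R.CommShift ℤ]
    [F.IsTriangulated] [L.IsTriangulated] [R.IsTriangulated]
    (adjL : L ⊣ F) (adjR : F ⊣ R) [F.Full] [F.Faithful]
    (T' : B ⥤ B) (δ : T' ⟶ 𝟭 B) (γ : L ⋙ F ⟶ T' ⋙ shiftFunctor B (1 : ℤ))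
    (hT' : ∀ X : B, Triangle.mk (δ.app X) (adjL.unit.app X) (γ.app X) ∈ distTriang B) :
    -- im F ⊆ Frb F = ker (R T')
    (∀ a : A, IsZero (R.obj (T'.obj (F.obj a)))) ∧
    -- im F and ker R ∩ ker L are mutually Hom-orthogonal
    (∀ X Y : B, (∃ a : A, Nonempty (F.obj a ≅ X)) →
      (IsZero (R.obj Y) ∧ IsZero (L.obj Y)) →
      (∀ (i : ℤ) (f : X ⟶ Y⟦i⟧), f = 0) ∧ (∀ (i : ℤ) (g : Y ⟶ X⟦i⟧), g = 0)) ∧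
    -- Frb F = im F ⊕ (ker R ∩ ker L)
    (∀ X : B, IsZero (R.obj (T'.obj X)) →
      ∃ (Y Z : B), (∃ a : A, Nonempty (F.obj a ≅ Y)) ∧
        (IsZero (R.obj Z) ∧ IsZero (L.obj Z)) ∧ Nonempty (X ≅ Y ⊞ Z)) := by
  refine ⟨?_, ?_, ?_⟩
  · -- im F ⊆ ker (R T')
    intro a
    have h1 : IsIso (adjL.unit.app (F.obj a)) := by
      have h := adjL.right_triangle_components a
      have h1' : adjL.unit.app (F.obj a) = inv (F.map (adjL.counit.app a)) := by
        apply (cancel_mono (F.map (adjL.counit.app a))).1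
        simp [h]
      rw [h1']
      infer_instance
    have h0 : IsZero (T'.obj (F.obj a)) :=
      (Triangle.isZero₁_iff_isIso₂ _ (hT' (F.obj a))).2 h1
    exact R.map_isZero h0
  · -- mutual orthogonality
    rintro X Y ⟨a, ⟨e⟩⟩ ⟨hRY, hLY⟩
    constructor
    · intro i f
      have hRYi : IsZero (R.obj (Y⟦i⟧)) :=
        ((shiftFunctor A i).map_isZero hRY).of_iso ((R.commShiftIso i).app Y)
      have : e.hom ≫ f = 0 := aux_hom_zero_of_isZero_R adjR hRYi _
      rw [← cancel_epi e.hom, this, comp_zero]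
    · intro i g
      have e2 : F.obj (a⟦i⟧) ≅ (F.obj a)⟦i⟧ := (F.commShiftIso i).app a
      have eX : F.obj (a⟦i⟧) ≅ X⟦i⟧ := e2 ≪≫ (shiftFunctor B i).mapIso e
      have hz : g ≫ eX.inv = 0 := aux_hom_zero_of_isZero_L adjL hLY _
      rw [← cancel_mono eX.inv, hz, zero_comp]
  · -- decomposition
    intro X hX
    refine ⟨F.obj (L.obj X), T'.obj X, ⟨L.obj X, ⟨Iso.refl _⟩⟩, ⟨hX, ?_⟩, ?_⟩
    · -- L (T' X) = 0
      have hmap := L.map_distinguished _ (hT' X)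
      have h1 : IsIso (L.map (adjL.unit.app X)) := by
        have h := adjL.left_triangle_components X
        have h1' : L.map (adjL.unit.app X) = inv (adjL.counit.app (L.obj X)) := by
          apply (cancel_mono (adjL.counit.app (L.obj X))).1
          simp [h]
        rw [h1']
        infer_instance
      have : IsIso ((L.mapTriangle.obj (Triangle.mk (δ.app X) (adjL.unit.app X) (γ.app X))).mor₂) := by
        dsimp; exact h1
      exact (Triangle.isZero₁_iff_isIso₂ _ hmap).2 this
    · -- splitting
      have hzero : γ.app X = 0 := by
        have hR1 : IsZero (R.obj ((T'.obj X)⟦(1 : ℤ)⟧)) :=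
          ((shiftFunctor A (1 : ℤ)).map_isZero hX).of_iso ((R.commShiftIso (1 : ℤ)).app (T'.obj X))
        exact aux_hom_zero_of_isZero_R adjR hR1 _
      obtain ⟨e, -, -⟩ := exists_iso_binaryBiproduct_of_distTriang _ (hT' X) hzero
      exact ⟨e ≪≫ biprod.braiding _ _⟩
end

section
/- Let F : A → B be an exceptional functor whose corestriction to a full triangulated subcategory C ⊇ im F is exceptionally Frobenius (i.e. the right and left adjoints of F|^C : A → C are isomorphic). Then C is contained in Frb F = ker(R T'). Consequently Frb F is the maximal full triangulated subcategory of B containing im F on which F becomes exceptionally Frobenius. -/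
open CategoryTheory Limits Pretriangulated

/-!
The dual twist triangle `T' X → X → F (L X) → (T' X)⟦1⟧` shows two things. First, `T' X` lies in
`C` whenever `X` does, because `X` and `F (L X)` do. Second, `L (T' X) = 0`, since `L` maps the
unit `X → F (L X)` to an isomorphism (`F` is fully faithful). On `C` the left and right adjoints of
`F` restrict to those of the corestriction, which are isomorphic by assumption, so
`R (T' X) ≅ L (T' X) = 0`.
-/

section Triangulated

variable {B : Type*} [Category B] [HasZeroObject B] [Preadditive B] [HasShift B ℤ]
  [∀ n : ℤ, (shiftFunctor B n).Additive] [Pretriangulated B]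

lemma mem_obj₁_of_distTriang (P : B → Prop) (hP_iso : ∀ X Y : B, P X → (X ≅ Y) → P Y)
    (hP_shift : ∀ (X : B) (n : ℤ), P X → P (X⟦n⟧))
    (hP_tri : ∀ T : Triangle B, T ∈ distTriang B → P T.obj₁ → P T.obj₂ → P T.obj₃)
    (T : Triangle B) (hT : T ∈ distTriang B) (h₂ : P T.obj₂) (h₃ : P T.obj₃) : P T.obj₁ :=
  have h₁ : P (T.obj₁⟦(1 : ℤ)⟧) := hP_tri _ (rot_of_distTriang _ hT) h₂ h₃
  hP_iso _ _ (hP_shift _ (-1) h₁) (shiftShiftNeg T.obj₁ 1)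

variable {A : Type*} [Category A] [HasZeroObject A] [Preadditive A] [HasShift A ℤ]
  [∀ n : ℤ, (shiftFunctor A n).Additive] [Pretriangulated A]

lemma CategoryTheory.Adjunction.isZero_obj_of_distTriang_unit {F : A ⥤ B} {L : B ⥤ A}
    [L.CommShift ℤ] [L.IsTriangulated] (adj : L ⊣ F) [F.Full] [F.Faithful] {X Y : B}
    (f : Y ⟶ X) (g : F.obj (L.obj X) ⟶ Y⟦(1 : ℤ)⟧)
    (hT : Triangle.mk f (adj.unit.app X) g ∈ distTriang B) : IsZero (L.obj Y) :=
  Triangle.isZero₁_of_isIso₂ _ (L.map_distinguished _ hT)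
    (inferInstanceAs (IsIso (L.map (adj.unit.app X))))

end Triangulated

section Corestriction

variable {A B : Type*} [Category A] [Category B] {P : ObjectProperty B}
  {F : A ⥤ B} {G : A ⥤ P.FullSubcategory} (e : G ⋙ P.ι ≅ F)

noncomputable def CategoryTheory.Adjunction.corestrictionRight {R : B ⥤ A} (adj : F ⊣ R) :
    G ⊣ P.ι ⋙ R :=
  adj.restrictFullyFaithful (Functor.FullyFaithful.id A) P.fullyFaithfulι
    (F.leftUnitor ≪≫ e.symm) (P.ι ⋙ R).rightUnitor.symm

noncomputable def CategoryTheory.Adjunction.corestrictionLeft {L : B ⥤ A} (adj : L ⊣ F) :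
    P.ι ⋙ L ⊣ G :=
  adj.restrictFullyFaithful P.fullyFaithfulι (Functor.FullyFaithful.id A)
    (P.ι ⋙ L).rightUnitor.symm (F.leftUnitor ≪≫ e.symm)

noncomputable def isoOfCorestrictionAdjointsIso {L R : B ⥤ A} (adjL : L ⊣ F) (adjR : F ⊣ R)
    {Gl Gr : P.FullSubcategory ⥤ A} (adjGl : Gl ⊣ G) (adjGr : G ⊣ Gr) (α : Gr ≅ Gl) :
    P.ι ⋙ L ≅ P.ι ⋙ R :=
  (adjL.corestrictionLeft e).leftAdjointUniq adjGl ≪≫ α.symm ≪≫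
    adjGr.rightAdjointUniq (adjR.corestrictionRight e)

end Corestriction

/-- Let `F : A ⥤ B` be an exceptional functor with adjoints
`L ⊣ F ⊣ R` and dual twist `T'`. If `C` is a full triangulated subcategory of
`B` containing `im F` such that the corestriction `G = F|^C` is exceptionally
Frobenius (fully faithful with isomorphic adjoints `Gl ⊣ G ⊣ Gr`), then `C` is
contained in `Frb F = ker (R T')`. -/
theorem frobenius_codomain_maximal {A B : Type*} [Category A] [Category B]
    [HasZeroObject A] [HasZeroObject B] [Preadditive A] [Preadditive B]
    [HasShift A ℤ] [HasShift B ℤ]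
    [∀ n : ℤ, (shiftFunctor A n).Additive] [∀ n : ℤ, (shiftFunctor B n).Additive]
    [Pretriangulated A] [Pretriangulated B]
    (F : A ⥤ B) (L R : B ⥤ A)
    [F.CommShift ℤ] [L.CommShift ℤ] [R.CommShift ℤ]
    [F.IsTriangulated] [L.IsTriangulated] [R.IsTriangulated]
    (adjL : L ⊣ F) (adjR : F ⊣ R) [F.Full] [F.Faithful]
    (T' : B ⥤ B) (δ : T' ⟶ 𝟭 B) (γ : L ⋙ F ⟶ T' ⋙ shiftFunctor B (1 : ℤ))
    (hT' : ∀ X : B, Triangle.mk (δ.app X) (adjL.unit.app X) (γ.app X) ∈ distTriang B)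
    -- C is a full triangulated subcategory of B containing im F
    (Cmem : B → Prop)
    (hC_iso : ∀ (X Y : B), Cmem X → (X ≅ Y) → Cmem Y)
    (hC_shift : ∀ (X : B) (n : ℤ), Cmem X → Cmem (X⟦n⟧))
    (hC_tri : ∀ T : Triangle B, (T ∈ distTriang B) → Cmem T.obj₁ → Cmem T.obj₂ →
      Cmem T.obj₃)
    (hC_im : ∀ a : A, Cmem (F.obj a))
    -- the corestriction G = F|^C and the comparison with F
    (G : A ⥤ ObjectProperty.FullSubcategory Cmem) [G.Full] [G.Faithful]
    (hG : G ⋙ ObjectProperty.ι Cmem ≅ F)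
    -- G is exceptionally Frobenius: both adjoints exist and are isomorphic
    (Gl Gr : ObjectProperty.FullSubcategory Cmem ⥤ A)
    (adjGl : Gl ⊣ G) (adjGr : G ⊣ Gr) (α : Gr ≅ Gl) :
    ∀ X : B, Cmem X → IsZero (R.obj (T'.obj X)) := by
  intro X hX
  have hT'X : Cmem (T'.obj X) :=
    mem_obj₁_of_distTriang Cmem hC_iso hC_shift hC_tri _ (hT' X) hX (hC_im (L.obj X))
  have hL : IsZero (L.obj (T'.obj X)) :=
    adjL.isZero_obj_of_distTriang_unit (δ.app X) (γ.app X) (hT' X)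
  have e := isoOfCorestrictionAdjointsIso hG adjL adjR adjGl adjGr α
  exact hL.of_iso (e.app ⟨T'.obj X, hT'X⟩).symm
end

section
/- Let F : A → B be an exact functor with adjoints L ⊣ F ⊣ R between enhanced triangulated categories, with twist T and cotwist C. Then there are natural isomorphisms T F [−1] ≅ F C [1] and R T [−1] ≅ C R [1]. -/
/-!
For `X : A`, the unit and counit exhibit `F X` as a retract of `F R F X`
(`F η_X ≫ ε_{F X} = 𝟙`). In the twist triangle `F R F X → F X → T F X →` the first map is
therefore split epi, and in the rotated image `F X → F R F X → F C X⟦1⟧ →` of the cotwist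
triangle the first map is split mono. Both `T F X` and `F C X⟦2⟧` are then images of the same
idempotent `(𝟙 - ε_{F X} ≫ F η_X)⟦1⟧` of `F R F X⟦1⟧`, hence isomorphic, naturally in `X`.
The second isomorphism comes in the same way from `R` applied to the twist triangle at `Y`,
the cotwist triangle at `R Y`, and the retraction `η_{R Y} ≫ R ε_Y = 𝟙`.
-/

open CategoryTheory Functor Limits Pretriangulated

theorem CategoryTheory.isIso_comp_of_retraction_of_section {𝒞 : Type*} [Category 𝒞] {Z E W : 𝒞}
    {b : Z ⟶ E} {g : E ⟶ W} (p : E ⟶ Z) (u : W ⟶ E) (hbp : b ≫ p = 𝟙 Z) (hug : u ≫ g = 𝟙 W)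
    (h : p ≫ b = g ≫ u) : IsIso (b ≫ g) :=
  ⟨u ≫ p, by simp [← reassoc_of% h, hbp], by simp [reassoc_of% h, hug]⟩

section

variable {𝒞 : Type*} [Category 𝒞] [HasZeroObject 𝒞] [Preadditive 𝒞] [HasShift 𝒞 ℤ]
  [∀ n : ℤ, (shiftFunctor 𝒞 n).Additive] [Pretriangulated 𝒞]

theorem CategoryTheory.Pretriangulated.exists_section_mor₂_of_retraction_mor₁ (T : Triangle 𝒞)
    (hT : T ∈ distTriang 𝒞) (r : T.obj₂ ⟶ T.obj₁) (hr : T.mor₁ ≫ r = 𝟙 _) :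
    ∃ s : T.obj₃ ⟶ T.obj₂, s ≫ T.mor₂ = 𝟙 _ ∧ T.mor₂ ≫ s = 𝟙 _ - r ≫ T.mor₁ := by
  obtain ⟨s, hs⟩ := T.yoneda_exact₂ hT (𝟙 _ - r ≫ T.mor₁) (by simp [reassoc_of% hr])
  have : IsSplitMono T.mor₁ := .mk' ⟨r, hr⟩
  have : Epi T.mor₂ := T.epi₂ hT (T.mor₃_eq_zero_of_mono₁ hT inferInstance)
  refine ⟨s, ?_, hs.symm⟩
  rw [← cancel_epi T.mor₂, ← Category.assoc, ← hs]
  simp [comp_distTriang_mor_zero₁₂ _ hT]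

theorem CategoryTheory.Pretriangulated.exists_retraction_mor₃_of_section_mor₁ (T : Triangle 𝒞)
    (hT : T ∈ distTriang 𝒞) (s : T.obj₂ ⟶ T.obj₁) (hs : s ≫ T.mor₁ = 𝟙 _) :
    ∃ p : T.obj₁⟦(1 : ℤ)⟧ ⟶ T.obj₃,
      T.mor₃ ≫ p = 𝟙 _ ∧ p ≫ T.mor₃ = (𝟙 _ - T.mor₁ ≫ s)⟦(1 : ℤ)⟧' := by
  obtain ⟨p, hp⟩ := T.coyoneda_exact₁ hT ((𝟙 _ - T.mor₁ ≫ s)⟦(1 : ℤ)⟧')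
    (by rw [← Functor.map_comp]; simp [hs])
  have : IsSplitEpi T.mor₁ := .mk' ⟨s, hs⟩
  have : Mono T.mor₃ := T.mono₃ hT (T.mor₂_eq_zero_of_epi₁ hT inferInstance)
  refine ⟨p, ?_, hp.symm⟩
  rw [← cancel_mono T.mor₃, Category.assoc, ← hp]
  simp [comp_distTriang_mor_zero₃₁_assoc _ hT]

theorem CategoryTheory.Pretriangulated.isIso_mor₃_comp_shift_map_mor₂ {E X Z W : 𝒞}
    {e : E ⟶ X} {c : X ⟶ Z} {b : Z ⟶ E⟦(1 : ℤ)⟧} {f : X ⟶ E} {g : E ⟶ W} {h : W ⟶ X⟦(1 : ℤ)⟧}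
    (h₁ : Triangle.mk e c b ∈ distTriang 𝒞) (h₂ : Triangle.mk f g h ∈ distTriang 𝒞)
    (hfe : f ≫ e = 𝟙 X) :
    IsIso (b ≫ g⟦(1 : ℤ)⟧') := by
  obtain ⟨p, hbp, hpb⟩ : ∃ p : E⟦(1 : ℤ)⟧ ⟶ Z, b ≫ p = 𝟙 Z ∧ p ≫ b = (𝟙 E - e ≫ f)⟦(1 : ℤ)⟧' :=
    exists_retraction_mor₃_of_section_mor₁ _ h₁ f hfe
  obtain ⟨u, hug, hgu⟩ : ∃ u : W ⟶ E, u ≫ g = 𝟙 W ∧ g ≫ u = 𝟙 E - e ≫ f :=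
    exists_section_mor₂_of_retraction_mor₁ _ h₂ e hfe
  refine isIso_comp_of_retraction_of_section p (u⟦(1 : ℤ)⟧') hbp ?_ ?_
  · rw [← Functor.map_comp, hug, Functor.map_id]
  · rw [← Functor.map_comp, hgu, hpb]

theorem CategoryTheory.Pretriangulated.nonempty_comp_shift_neg_one_iso_of_distTriang
    {J : Type*} [Category J] {Φ M K Ψ : J ⥤ 𝒞} (e : M ⟶ K) (b : Φ ⟶ M ⋙ shiftFunctor 𝒞 (1 : ℤ))
    (f : K ⟶ M) (g : M ⟶ Ψ) (hfe : f ≫ e = 𝟙 K)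
    (h₁ : ∀ j, ∃ c, Triangle.mk (e.app j) c (b.app j) ∈ distTriang 𝒞)
    (h₂ : ∀ j, ∃ h, Triangle.mk (f.app j) (g.app j) h ∈ distTriang 𝒞) :
    Nonempty (Φ ⋙ shiftFunctor 𝒞 (-1 : ℤ) ≅ Ψ) := by
  let φ : Φ ⟶ Ψ ⋙ shiftFunctor 𝒞 (1 : ℤ) := b ≫ whiskerRight g _
  have (j : J) : IsIso (φ.app j) := by
    obtain ⟨c, hc⟩ := h₁ j
    obtain ⟨h, hh⟩ := h₂ j
    exact isIso_mor₃_comp_shift_map_mor₂ hc hh (congr_app hfe j)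
  have : IsIso φ := NatIso.isIso_of_isIso_app φ
  exact ⟨isoWhiskerRight (asIso φ) _ ≪≫ associator _ _ _ ≪≫
    isoWhiskerLeft Ψ (shiftFunctorCompIsoId 𝒞 (1 : ℤ) (-1) (by norm_num)) ≪≫ rightUnitor Ψ⟩

end

/-- For an exact functor `F` with adjoints `L ⊣ F ⊣ R`, twist `T`
(triangle `FR → id → T`) and cotwist `C` (triangle `C → id → RF`), there are
natural isomorphisms `T F [-1] ≅ F C [1]` and `R T [-1] ≅ C R [1]`. -/
theorem twist_cotwist_compatibilities {A B : Type*} [Category A] [Category B]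
    [HasZeroObject A] [HasZeroObject B] [Preadditive A] [Preadditive B]
    [HasShift A ℤ] [HasShift B ℤ]
    [∀ n : ℤ, (shiftFunctor A n).Additive] [∀ n : ℤ, (shiftFunctor B n).Additive]
    [Pretriangulated A] [Pretriangulated B]
    (F : A ⥤ B) (L R : B ⥤ A)
    [F.CommShift ℤ] [L.CommShift ℤ] [R.CommShift ℤ]
    [F.IsTriangulated] [L.IsTriangulated] [R.IsTriangulated]
    (adjL : L ⊣ F) (adjR : F ⊣ R)
    -- the twist T, defined by the triangle FR → id_B → T
    (T : B ⥤ B) (α : 𝟭 B ⟶ T) (β : T ⟶ (R ⋙ F) ⋙ shiftFunctor B (1 : ℤ))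
    (hT : ∀ X : B, Triangle.mk (adjR.counit.app X) (α.app X) (β.app X) ∈ distTriang B)
    -- the cotwist C, defined by the triangle C → id_A → RF
    (C : A ⥤ A) (δ : C ⟶ 𝟭 A) (γ : F ⋙ R ⟶ C ⋙ shiftFunctor A (1 : ℤ))
    (hC : ∀ X : A, Triangle.mk (δ.app X) (adjR.unit.app X) (γ.app X) ∈ distTriang A) :
    Nonempty ((F ⋙ T) ⋙ shiftFunctor B (-1 : ℤ) ≅ (C ⋙ F) ⋙ shiftFunctor B (1 : ℤ)) ∧
    Nonempty ((T ⋙ R) ⋙ shiftFunctor A (-1 : ℤ) ≅ (R ⋙ C) ⋙ shiftFunctor A (1 : ℤ)) := by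
  constructor
  · exact nonempty_comp_shift_neg_one_iso_of_distTriang (M := F ⋙ R ⋙ F)
      (whiskerLeft F adjR.counit) (whiskerLeft F β) (whiskerRight adjR.unit F)
      (whiskerRight γ F ≫ whiskerLeft C (F.commShiftIso (1 : ℤ)).hom)
      (by ext X; exact adjR.left_triangle_components X)
      (fun X ↦ ⟨_, hT (F.obj X)⟩)
      (fun X ↦ ⟨_, rot_of_distTriang _ (F.map_distinguished _ (hC X))⟩)
  · exact nonempty_comp_shift_neg_one_iso_of_distTriang (M := R ⋙ F ⋙ R)
      (whiskerRight adjR.counit R)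
      (whiskerRight β R ≫ whiskerLeft (R ⋙ F) (R.commShiftIso (1 : ℤ)).hom)
      (whiskerLeft R adjR.unit) (whiskerLeft R γ)
      (by ext Y; exact adjR.right_triangle_components Y)
      (fun Y ↦ ⟨_, R.map_distinguished _ (hT Y)⟩)
      (fun Y ↦ ⟨_, rot_of_distTriang _ (hC (R.obj Y))⟩)
end
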